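/- Let d ≥ 1 and let Ω = [0,1]ᵈ ⊂ ℝᵈ be the closed unit cube with outward unit normal ν on its boundary ∂Ω. Let T > 0, β ∈ ℝ, M, R ≥ 1, Γ = (γ_{i,p}) ∈ ℝ^{M×R}, let V_{1,i} : ℝ → ℝ be continuous with V_{1,i} > 0 on ℝ for 1 ≤ i ≤ M, let V_{2,p} : ℝᴹ → ℝ be continuous with V_{2,p} > 0 on ℝᴹ for 1 ≤ p ≤ R, and let E₁, …, E_M : ℝ → ℝ be twice continuously differentiable. Let ρᵢ : [0,T] × Ω → ℝ be continuously differentiable, let mᵢ : [0,T] × Ω → ℝᵈ be continuous and continuously differentiable in x with mᵢ·ν = 0 on [0,T] × ∂Ω, and let s_p : [0,T] × Ω → ℝ be continuous, such that ∂ₜρᵢ + ∇·mᵢ − Σ_{p=1}^{R}γ_{i,p}s_p = 0 on [0,T] × Ω for all 1 ≤ i ≤ M. Define m̃ᵢ = mᵢ + βV_{1,i}(ρᵢ)∇(Eᵢ′(ρᵢ)) and s̃_p = s_p + βV_{2,p}(ρ)Σ_{j=1}^{M}γ_{j,p}Eⱼ′(ρⱼ), where ρ = (ρ₁,…,ρ_M).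 Then ∫₀ᵀ∫_Ω [ Σ_{i=1}^{M} ‖m̃ᵢ‖²/(2V_{1,i}(ρᵢ)) + Σ_{p=1}^{R} |s̃_p|²/(2V_{2,p}(ρ)) ] dx dt = ∫₀ᵀ∫_Ω [ Σ_{i=1}^{M} ( ‖mᵢ‖²/(2V_{1,i}(ρᵢ)) + (β²/2)V_{1,i}(ρᵢ)‖∇(Eᵢ′(ρᵢ))‖² ) + Σ_{p=1}^{R} ( |s_p|²/(2V_{2,p}(ρ)) + (β²/2)V_{2,p}(ρ)|Σ_{j=1}^{M}γ_{j,p}Eⱼ′(ρⱼ)|² ) ] dx dt + β Σ_{i=1}^{M} ∫_Ω ( Eᵢ(ρᵢ(T,x)) − Eᵢ(ρᵢ(0,x)) ) dx. -/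

import Mathlib

/-!
Completing the square pointwise splits the shifted kinetic energy into the unshifted one, the
Fisher-information terms and `β` times the cross term `Σᵢ mᵢ·∇φᵢ + Σₚ sₚ Σⱼ γⱼₚ φⱼ`, where
`φᵢ = Eᵢ′(ρᵢ)`. At each time, integrating `mᵢ·∇φᵢ` by parts against the no-flux condition and
substituting the continuity equation turns the integral of the cross term into
`∫_Ω Σᵢ φᵢ ∂ₜρᵢ = ∫_Ω ∂ₜ Σᵢ Eᵢ(ρᵢ)`; after Fubini, the fundamental theorem of calculus in time
gives the energy difference.
-/

open MeasureTheory

/-- `i`-th partial derivative of a scalar field on `ℝᵈ`. -/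
noncomputable def pd (d : ℕ) (f : (Fin d → ℝ) → ℝ) (i : Fin d) (x : Fin d → ℝ) : ℝ :=
  fderiv ℝ f x (Pi.single i 1)

/-- Divergence of a vector field on `ℝᵈ`. -/
noncomputable def divg (d : ℕ) (F : (Fin d → ℝ) → (Fin d → ℝ)) (x : Fin d → ℝ) : ℝ :=
  ∑ i, pd d (fun y => F y i) i x

open Set Function

section SectionDerivatives

variable {F G : Type*} [NormedAddCommGroup F] [NormedSpace ℝ F] [NormedAddCommGroup G]
  [NormedSpace ℝ G] {Φ : ℝ × F → G}

theorem deriv_section_fst_eq {t : ℝ} {x : F} (hΦ : DifferentiableAt ℝ Φ (t, x)) :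
    deriv (fun τ => Φ (τ, x)) t = fderiv ℝ Φ (t, x) (1, 0) :=
  (hΦ.hasFDerivAt.comp t (hasFDerivAt_prodMk_left (𝕜 := ℝ) t x)).hasDerivAt.deriv

theorem ContDiff.continuous_deriv_section_fst (hΦ : ContDiff ℝ 1 Φ) :
    Continuous fun q : ℝ × F => deriv (fun τ => Φ (τ, q.2)) q.1 := by
  simp_rw [deriv_section_fst_eq (hΦ.differentiable one_ne_zero _)]
  exact (hΦ.continuous_fderiv one_ne_zero).clm_apply continuous_const

end SectionDerivatives

section PartialDerivatives

variable {d : ℕ}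

theorem pd_section_snd_eq {Φ : ℝ × (Fin d → ℝ) → ℝ} {t : ℝ} {x : Fin d → ℝ}
    (hΦ : DifferentiableAt ℝ Φ (t, x)) (j : Fin d) :
    pd d (fun z => Φ (t, z)) j x = fderiv ℝ Φ (t, x) (0, Pi.single j 1) := by
  have h : HasFDerivAt (fun z => Φ (t, z))
      ((fderiv ℝ Φ (t, x)).comp (ContinuousLinearMap.inr ℝ ℝ (Fin d → ℝ))) x :=
    hΦ.hasFDerivAt.comp x (hasFDerivAt_prodMk_right t x)
  rw [pd, h.fderiv]
  rfl

theorem ContDiff.continuous_pd_section_snd {Φ : ℝ × (Fin d → ℝ) → ℝ} (hΦ : ContDiff ℝ 1 Φ)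
    (j : Fin d) : Continuous fun q : ℝ × (Fin d → ℝ) => pd d (fun z => Φ (q.1, z)) j q.2 := by
  simp_rw [pd_section_snd_eq (hΦ.differentiable one_ne_zero _)]
  exact (hΦ.continuous_fderiv one_ne_zero).clm_apply continuous_const

theorem ContDiff.continuous_pd {f : (Fin d → ℝ) → ℝ} (hf : ContDiff ℝ 1 f) (j : Fin d) :
    Continuous (pd d f j) :=
  (hf.continuous_fderiv one_ne_zero).clm_apply continuous_const

theorem continuous_divg {F : (Fin d → ℝ) → Fin d → ℝ} (hF : ∀ j, ContDiff ℝ 1 fun x => F x j) :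
    Continuous (divg d F) :=
  continuous_finsetSum _ fun j _ => (hF j).continuous_pd j

theorem divg_smul {φ : (Fin d → ℝ) → ℝ} {F : (Fin d → ℝ) → Fin d → ℝ} {x : Fin d → ℝ}
    (hφ : DifferentiableAt ℝ φ x) (hF : ∀ j, DifferentiableAt ℝ (fun y => F y j) x) :
    divg d (fun y => φ y • F y) x = ∑ j, F x j * pd d φ j x + φ x * divg d F x := by
  have hpd : ∀ j, pd d (fun y => φ y * F y j) j x
      = F x j * pd d φ j x + φ x * pd d (fun y => F y j) j x := fun j => by
    rw [pd, fderiv_fun_mul hφ (hF j)]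
    simp only [add_apply, smul_apply, smul_eq_mul]
    rw [pd, pd]
    ring
  simp only [divg, Pi.smul_apply, smul_eq_mul, hpd, Finset.sum_add_distrib, Finset.mul_sum]

end PartialDerivatives

theorem mem_frontier_Icc_of_apply_eq {ι : Type*} [Finite ι] {a b x : ι → ℝ} (hx : x ∈ Icc a b)
    {j : ι} (hj : x j = a j ∨ x j = b j) : x ∈ frontier (Icc a b) := by
  rw [isClosed_Icc.frontier_eq, ← pi_univ_Icc, interior_pi_set finite_univ]
  refine ⟨pi_univ_Icc a b ▸ hx, fun hint => ?_⟩
  have : x j ∈ interior (Icc (a j) (b j)) := hint j (mem_univ j)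
  rw [interior_Icc] at this
  rcases hj with h | h <;> simp [h] at this

theorem integral_divg_eq_zero {d : ℕ} {a b : Fin d → ℝ} (hab : a ≤ b)
    {F : (Fin d → ℝ) → Fin d → ℝ} (hF : ∀ j, ContDiff ℝ 1 fun x => F x j)
    (hbc : ∀ x ∈ frontier (Icc a b), ∀ j, (x j = a j ∨ x j = b j) → F x j = 0) :
    ∫ x in Icc a b, divg d F x = 0 := by
  cases d with
  | zero => simp [divg]
  | succ n =>
    unfold divg pd
    rw [integral_divergence_of_hasFDerivAt_off_countable' a b hab (fun j x => F x j)
      (fun j x => fderiv ℝ (fun y => F y j) x) ∅ countable_empty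
      (fun j => (hF j).continuous.continuousOn)
      (fun x _ j => ((hF j).differentiable one_ne_zero x).hasFDerivAt)
      (continuous_divg hF).integrableOn_Icc]
    refine Finset.sum_eq_zero fun j _ => ?_
    have hface : ∀ c ∈ ({a j, b j} : Set ℝ),
        ∫ y in Icc (a ∘ j.succAbove) (b ∘ j.succAbove), F (j.insertNth c y) j = 0 := by
      intro c hc
      refine setIntegral_eq_zero_of_forall_eq_zero fun y hy => hbc _ ?_ j (by simpa using hc)
      refine mem_frontier_Icc_of_apply_eq (j := j) ?_ (by simpa using hc)
      rw [Fin.insertNth_mem_Icc]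
      exact ⟨by rcases hc with rfl | rfl <;> simp [hab j], hy⟩
    rw [hface _ (by simp), hface _ (by simp), sub_zero]

theorem integral_flux_add_reaction_eq {d M R : ℕ} {a b : Fin d → ℝ} (hab : a ≤ b)
    (γ : Fin M → Fin R → ℝ) {φ r : Fin M → (Fin d → ℝ) → ℝ}
    {m : Fin M → (Fin d → ℝ) → Fin d → ℝ} {s : Fin R → (Fin d → ℝ) → ℝ}
    (hφ : ∀ i, ContDiff ℝ 1 (φ i)) (hm : ∀ i j, ContDiff ℝ 1 fun x => m i x j)
    (hs : ∀ p, Continuous (s p))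
    (hbc : ∀ i, ∀ x ∈ frontier (Icc a b), ∀ j, (x j = a j ∨ x j = b j) → m i x j = 0)
    (hpde : ∀ i, ∀ x ∈ Icc a b, r i x + divg d (m i) x - ∑ p, γ i p * s p x = 0) :
    ∫ x in Icc a b, (∑ i, ∑ j, m i x j * pd d (φ i) j x + ∑ p, s p x * ∑ i, γ i p * φ i x)
      = ∫ x in Icc a b, ∑ i, φ i x * r i x := by
  have hφm : ∀ i j, ContDiff ℝ 1 fun x => (φ i x • m i x) j := fun i j => (hφ i).mul (hm i j)
  have hdiv_zero : ∀ i, ∫ x in Icc a b, divg d (fun x => φ i x • m i x) x = 0 := fun i =>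
    integral_divg_eq_zero hab (hφm i) fun x hx j hj => by
      simp [hbc i x hx j hj]
  have hsplit : ∀ x ∈ Icc a b,
      ∑ i, ∑ j, m i x j * pd d (φ i) j x + ∑ p, s p x * ∑ i, γ i p * φ i x
        - ∑ i, divg d (fun x => φ i x • m i x) x = ∑ i, φ i x * r i x := by
    intro x hx
    have hreact : ∑ p, s p x * ∑ i, γ i p * φ i x = ∑ i, φ i x * ∑ p, γ i p * s p x := by
      simp only [Finset.mul_sum]
      rw [Finset.sum_comm]
      exact Finset.sum_congr rfl fun i _ => Finset.sum_congr rfl fun p _ => by ring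
    have hrate : ∀ i, ∑ p, γ i p * s p x = r i x + divg d (m i) x := fun i => by
      linarith [hpde i x hx]
    have hprod : ∀ i, divg d (fun x => φ i x • m i x) x
        = ∑ j, m i x j * pd d (φ i) j x + φ i x * divg d (m i) x := fun i =>
      divg_smul ((hφ i).differentiable one_ne_zero x) fun j => (hm i j).differentiable one_ne_zero x
    simp only [hreact, hrate, hprod, mul_add, Finset.sum_add_distrib]
    ring
  have hcont : Continuous fun x => ∑ i, ∑ j, m i x j * pd d (φ i) j x
      + ∑ p, s p x * ∑ i, γ i p * φ i x := by
    have hgradc := fun i j => (hφ i).continuous_pd j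
    have hmc := fun i j => (hm i j).continuous
    have hφc := fun i => (hφ i).continuous
    fun_prop
  have hdiv_int : ∀ i, Integrable (divg d fun x => φ i x • m i x) (volume.restrict (Icc a b)) :=
    fun i => (continuous_divg (hφm i)).integrableOn_Icc
  rw [← setIntegral_congr_fun measurableSet_Icc hsplit, integral_sub hcont.integrableOn_Icc
    (integrable_finsetSum _ fun i _ => hdiv_int i), integral_finsetSum _ fun i _ => hdiv_int i]
  simp [hdiv_zero]

theorem add_mul_sq_div_eq (a b β : ℝ) {V : ℝ} (hV : V ≠ 0) :
    (a + β * (V * b)) ^ 2 / (2 * V) = a ^ 2 / (2 * V) + β ^ 2 / 2 * V * b ^ 2 + β * (a * b) := by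
  field_simp
  ring

theorem kinetic_energy_shift_eq {M R ι : Type*} [Fintype M] [Fintype R] [Fintype ι] (β : ℝ)
    (a b : M → ι → ℝ) (c e : R → ℝ) {V : M → ℝ} {W : R → ℝ} (hV : ∀ i, V i ≠ 0)
    (hW : ∀ p, W p ≠ 0) :
    ∑ i, (∑ j, (a i j + β * (V i * b i j)) ^ 2) / (2 * V i)
        + ∑ p, (c p + β * (W p * e p)) ^ 2 / (2 * W p)
      = (∑ i, ((∑ j, a i j ^ 2) / (2 * V i) + β ^ 2 / 2 * V i * ∑ j, b i j ^ 2)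
          + ∑ p, (c p ^ 2 / (2 * W p) + β ^ 2 / 2 * W p * e p ^ 2))
        + β * (∑ i, ∑ j, a i j * b i j + ∑ p, c p * e p) := by
  simp only [Finset.sum_div, add_mul_sq_div_eq _ _ _ (hV _), add_mul_sq_div_eq _ _ _ (hW _),
    Finset.sum_add_distrib, ← Finset.mul_sum]
  ring

theorem integral_Icc_sum_deriv_comp_mul_deriv {ι : Type*} (s : Finset ι) {a b : ℝ} (hab : a ≤ b)
    {f g : ι → ℝ → ℝ} (hf : ∀ i, ContDiff ℝ 1 (f i)) (hg : ∀ i, ContDiff ℝ 1 (g i)) :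
    ∫ t in Icc a b, ∑ i ∈ s, deriv (g i) (f i t) * deriv (f i) t
      = ∑ i ∈ s, (g i (f i b) - g i (f i a)) := by
  have hcont : ∀ i, Continuous fun t => deriv (g i) (f i t) * deriv (f i) t := fun i =>
    ((hg i).continuous_deriv le_rfl).comp (hf i).continuous |>.mul
      ((hf i).continuous_deriv le_rfl)
  rw [integral_Icc_eq_integral_Ioc, ← intervalIntegral.integral_of_le hab,
    intervalIntegral.integral_finsetSum fun i _ => (hcont i).intervalIntegrable a b]
  refine Finset.sum_congr rfl fun i _ => intervalIntegral.integral_deriv_comp_mul_deriv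
    (fun t _ => ((hf i).differentiable one_ne_zero t).hasDerivAt)
    (fun t _ => ((hg i).differentiable one_ne_zero _).hasDerivAt)
    ((hf i).continuous_deriv le_rfl).continuousOn ((hg i).continuous_deriv le_rfl)

section Fubini

variable {X Y : Type*} [TopologicalSpace X] [T2Space X] [MeasurableSpace X]
  [OpensMeasurableSpace X] [TopologicalSpace Y] [T2Space Y] [SecondCountableTopology Y]
  [MeasurableSpace Y] [OpensMeasurableSpace Y]
  {μ : Measure X} {ν : Measure Y} [IsFiniteMeasureOnCompacts μ] [IsFiniteMeasureOnCompacts ν]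
  [SFinite μ] [SFinite ν] {s : Set X} {t : Set Y}

theorem Continuous.integrable_restrict_prod {f : X → Y → ℝ}
    (hf : Continuous fun q : X × Y => f q.1 q.2) (hs : IsCompact s) (ht : IsCompact t) :
    Integrable (uncurry f) ((μ.restrict s).prod (ν.restrict t)) := by
  rw [Measure.prod_restrict]
  exact hf.continuousOn.integrableOn_compact (hs.prod ht)

theorem integral_integral_eq_add_of_cross_term (hs : IsCompact s) (ht : IsCompact t) (β : ℝ)
    {L R C Ψ : X → Y → ℝ} {D : Y → ℝ} (hR : Continuous fun q : X × Y => R q.1 q.2)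
    (hC : Continuous fun q : X × Y => C q.1 q.2) (hΨ : Continuous fun q : X × Y => Ψ q.1 q.2)
    (hL : ∀ u y, L u y = R u y + β * C u y)
    (hCΨ : ∀ u ∈ s, ∫ y in t, C u y ∂ν = ∫ y in t, Ψ u y ∂ν)
    (hΨD : ∀ y ∈ t, ∫ u in s, Ψ u y ∂μ = D y) :
    ∫ u in s, ∫ y in t, L u y ∂ν ∂μ
      = ∫ u in s, ∫ y in t, R u y ∂ν ∂μ + β * ∫ y in t, D y ∂ν := by
  have hβC : Integrable (fun q : X × Y => β * C q.1 q.2) ((μ.restrict s).prod (ν.restrict t)) :=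
    (hC.integrable_restrict_prod hs ht).const_mul β
  calc ∫ u in s, ∫ y in t, L u y ∂ν ∂μ
      = ∫ u in s, ∫ y in t, R u y ∂ν ∂μ + ∫ u in s, ∫ y in t, β * C u y ∂ν ∂μ := by
        simp only [hL]
        exact integral_integral_add (hR.integrable_restrict_prod hs ht) hβC
    _ = ∫ u in s, ∫ y in t, R u y ∂ν ∂μ + β * ∫ u in s, ∫ y in t, Ψ u y ∂ν ∂μ := by
        simp only [integral_const_mul]
        rw [setIntegral_congr_fun hs.measurableSet hCΨ]
    _ = ∫ u in s, ∫ y in t, R u y ∂ν ∂μ + β * ∫ y in t, D y ∂ν := by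
        rw [integral_integral_swap (hΨ.integrable_restrict_prod hs ht),
          setIntegral_congr_fun ht.measurableSet hΨD]

end Fubini

theorem system_mfc_energy_identity_general (d : ℕ) (T : ℝ) (hT : 0 < T)
    (β : ℝ) (M R : ℕ) (γ : Fin M → Fin R → ℝ)
    (V₁ : Fin M → ℝ → ℝ) (hV₁c : ∀ i, Continuous (V₁ i))
    (hV₁pos : ∀ i r, 0 < V₁ i r)
    (V₂ : Fin R → (Fin M → ℝ) → ℝ) (hV₂c : ∀ p, Continuous (V₂ p))
    (hV₂pos : ∀ p v, 0 < V₂ p v)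
    (E : Fin M → ℝ → ℝ) (hE : ∀ i, ContDiff ℝ 2 (E i))
    (ρ : Fin M → ℝ → (Fin d → ℝ) → ℝ)
    (hρ : ∀ i, ContDiff ℝ 1 (fun q : ℝ × (Fin d → ℝ) => ρ i q.1 q.2))
    (m : Fin M → ℝ → (Fin d → ℝ) → (Fin d → ℝ))
    (hmc : ∀ i, Continuous (fun q : ℝ × (Fin d → ℝ) => m i q.1 q.2))
    (hmx : ∀ i t, ∀ j : Fin d, ContDiff ℝ 1 (fun x => m i t x j))
    (s : Fin R → ℝ → (Fin d → ℝ) → ℝ)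
    (hsc : ∀ p, Continuous (fun q : ℝ × (Fin d → ℝ) => s p q.1 q.2))
    (hbc : ∀ i, ∀ t ∈ Set.Icc (0 : ℝ) T,
      ∀ x ∈ frontier (Set.Icc (0 : Fin d → ℝ) 1), ∀ j : Fin d,
        (x j = 0 ∨ x j = 1) → m i t x j = 0)
    (hpde : ∀ i, ∀ t ∈ Set.Icc (0 : ℝ) T, ∀ x ∈ Set.Icc (0 : Fin d → ℝ) 1,
      deriv (fun τ => ρ i τ x) t + divg d (m i t) x
        - ∑ p, γ i p * s p t x = 0)
    (mt : Fin M → ℝ → (Fin d → ℝ) → (Fin d → ℝ))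
    (st : Fin R → ℝ → (Fin d → ℝ) → ℝ)
    (hmt : ∀ i t x j, mt i t x j
      = m i t x j
        + β * (V₁ i (ρ i t x) * pd d (fun z => deriv (E i) (ρ i t z)) j x))
    (hst : ∀ p t x, st p t x
      = s p t x
        + β * (V₂ p (fun j => ρ j t x) * ∑ j, γ j p * deriv (E j) (ρ j t x))) :
    (∫ t in Set.Icc (0 : ℝ) T, ∫ x in Set.Icc (0 : Fin d → ℝ) 1,
        ((∑ i, (∑ j, (mt i t x j) ^ 2) / (2 * V₁ i (ρ i t x)))
          + ∑ p, (st p t x) ^ 2 / (2 * V₂ p (fun j => ρ j t x))))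
      = (∫ t in Set.Icc (0 : ℝ) T, ∫ x in Set.Icc (0 : Fin d → ℝ) 1,
          ((∑ i, ((∑ j, (m i t x j) ^ 2) / (2 * V₁ i (ρ i t x))
              + (β ^ 2 / 2) * V₁ i (ρ i t x)
                  * ∑ j, (pd d (fun z => deriv (E i) (ρ i t z)) j x) ^ 2))
            + ∑ p, ((s p t x) ^ 2 / (2 * V₂ p (fun j => ρ j t x))
              + (β ^ 2 / 2) * V₂ p (fun j => ρ j t x)
                  * (∑ j, γ j p * deriv (E j) (ρ j t x)) ^ 2)))
        + β * ∑ i, ∫ x in Set.Icc (0 : Fin d → ℝ) 1,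
            (E i (ρ i T x) - E i (ρ i 0 x)) := by
  have hφ : ∀ i, ContDiff ℝ 1 fun q : ℝ × (Fin d → ℝ) => deriv (E i) (ρ i q.1 q.2) :=
    fun i => (hE i).deriv'.comp (hρ i)
  have hφc := fun i => (hφ i).continuous
  have hgradc : ∀ i j, Continuous fun q : ℝ × (Fin d → ℝ) =>
      pd d (fun z => deriv (E i) (ρ i q.1 z)) j q.2 :=
    fun i j => (hφ i).continuous_pd_section_snd j
  have hρtc : ∀ i, Continuous fun q : ℝ × (Fin d → ℝ) => deriv (fun τ => ρ i τ q.2) q.1 :=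
    fun i => (hρ i).continuous_deriv_section_fst
  rw [← integral_finsetSum]
  refine integral_integral_eq_add_of_cross_term isCompact_Icc isCompact_Icc β
    (C := fun t x => ∑ i, ∑ j, m i t x j * pd d (fun z => deriv (E i) (ρ i t z)) j x
      + ∑ p, s p t x * ∑ j, γ j p * deriv (E j) (ρ j t x))
    (Ψ := fun t x => ∑ i, deriv (E i) (ρ i t x) * deriv (fun τ => ρ i τ x) t)
    (by fun_prop (disch := simp [fun i r => (hV₁pos i r).ne', fun p v => (hV₂pos p v).ne']))
    (by fun_prop) (by fun_prop) (fun t x => ?_) (fun t ht => ?_) (fun x _ => ?_)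
  · simp only [hmt, hst]
    exact kinetic_energy_shift_eq β _ _ _ _ (fun i => (hV₁pos i _).ne') fun p => (hV₂pos p _).ne'
  · exact integral_flux_add_reaction_eq zero_le_one γ
      (fun i => (hφ i).comp (contDiff_const.prodMk contDiff_id)) (hmx · t)
      (fun p => (hsc p).comp (continuous_const.prodMk continuous_id)) (hbc · t ht) (hpde · t ht)
  · exact integral_Icc_sum_deriv_comp_mul_deriv _ hT.le
      (fun i => (hρ i).comp (contDiff_id.prodMk contDiff_const)) fun i => (hE i).of_le one_le_two
  · exact fun i _ => Continuous.integrableOn_Icc (by fun_prop)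

/-- The integral identity behind the system mean-field control reformulation with `M`
species and `R` reactions: if `∂ₜρᵢ + ∇·mᵢ − Σₚ γᵢₚ sₚ = 0` on `[0,T] × [0,1]ᵈ` with
no-flux boundary conditions for each `mᵢ` on the cube (at a boundary point `x` with
`x j ∈ {0,1}` the outward normal is `∓eⱼ`), and `m̃ᵢ = mᵢ + βV₁ᵢ(ρᵢ)∇(Eᵢ′(ρᵢ))`,
`s̃ₚ = sₚ + βV₂ₚ(ρ)Σⱼ γⱼₚ Eⱼ′(ρⱼ)`, then the kinetic energy in `(m̃, s̃)` equals the
kinetic energy in `(m, s)` plus the Fisher-information terms plus the total energy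
difference `β Σᵢ ∫_Ω (Eᵢ(ρᵢ(T,·)) − Eᵢ(ρᵢ(0,·)))`. -/
theorem system_mfc_energy_identity (d : ℕ) (hd : 1 ≤ d) (T : ℝ) (hT : 0 < T)
    (β : ℝ) (M R : ℕ) (hM : 1 ≤ M) (hR : 1 ≤ R) (γ : Fin M → Fin R → ℝ)
    (V₁ : Fin M → ℝ → ℝ) (hV₁c : ∀ i, Continuous (V₁ i))
    (hV₁pos : ∀ i r, 0 < V₁ i r)
    (V₂ : Fin R → (Fin M → ℝ) → ℝ) (hV₂c : ∀ p, Continuous (V₂ p))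
    (hV₂pos : ∀ p v, 0 < V₂ p v)
    (E : Fin M → ℝ → ℝ) (hE : ∀ i, ContDiff ℝ 2 (E i))
    (ρ : Fin M → ℝ → (Fin d → ℝ) → ℝ)
    (hρ : ∀ i, ContDiff ℝ 1 (fun q : ℝ × (Fin d → ℝ) => ρ i q.1 q.2))
    (m : Fin M → ℝ → (Fin d → ℝ) → (Fin d → ℝ))
    (hmc : ∀ i, Continuous (fun q : ℝ × (Fin d → ℝ) => m i q.1 q.2))
    (hmx : ∀ i t, ∀ j : Fin d, ContDiff ℝ 1 (fun x => m i t x j))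
    (s : Fin R → ℝ → (Fin d → ℝ) → ℝ)
    (hsc : ∀ p, Continuous (fun q : ℝ × (Fin d → ℝ) => s p q.1 q.2))
    (hbc : ∀ i, ∀ t ∈ Set.Icc (0 : ℝ) T,
      ∀ x ∈ frontier (Set.Icc (0 : Fin d → ℝ) 1), ∀ j : Fin d,
        (x j = 0 ∨ x j = 1) → m i t x j = 0)
    (hpde : ∀ i, ∀ t ∈ Set.Icc (0 : ℝ) T, ∀ x ∈ Set.Icc (0 : Fin d → ℝ) 1,
      deriv (fun τ => ρ i τ x) t + divg d (m i t) x
        - ∑ p, γ i p * s p t x = 0)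
    (mt : Fin M → ℝ → (Fin d → ℝ) → (Fin d → ℝ))
    (st : Fin R → ℝ → (Fin d → ℝ) → ℝ)
    (hmt : ∀ i t x j, mt i t x j
      = m i t x j
        + β * (V₁ i (ρ i t x) * pd d (fun z => deriv (E i) (ρ i t z)) j x))
    (hst : ∀ p t x, st p t x
      = s p t x
        + β * (V₂ p (fun j => ρ j t x) * ∑ j, γ j p * deriv (E j) (ρ j t x))) :
    (∫ t in Set.Icc (0 : ℝ) T, ∫ x in Set.Icc (0 : Fin d → ℝ) 1,
        ((∑ i, (∑ j, (mt i t x j) ^ 2) / (2 * V₁ i (ρ i t x)))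
          + ∑ p, (st p t x) ^ 2 / (2 * V₂ p (fun j => ρ j t x))))
      = (∫ t in Set.Icc (0 : ℝ) T, ∫ x in Set.Icc (0 : Fin d → ℝ) 1,
          ((∑ i, ((∑ j, (m i t x j) ^ 2) / (2 * V₁ i (ρ i t x))
              + (β ^ 2 / 2) * V₁ i (ρ i t x)
                  * ∑ j, (pd d (fun z => deriv (E i) (ρ i t z)) j x) ^ 2))
            + ∑ p, ((s p t x) ^ 2 / (2 * V₂ p (fun j => ρ j t x))
              + (β ^ 2 / 2) * V₂ p (fun j => ρ j t x)
                  * (∑ j, γ j p * deriv (E j) (ρ j t x)) ^ 2)))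
        + β * ∑ i, ∫ x in Set.Icc (0 : Fin d → ℝ) 1,
            (E i (ρ i T x) - E i (ρ i 0 x)) :=
  system_mfc_energy_identity_general d T hT β M R γ V₁ hV₁c hV₁pos V₂ hV₂c hV₂pos E hE ρ hρ m hmc
    hmx s hsc hbc hpde mt st hmt hst
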